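/- Let f : G → H be a continuous surjective homomorphism of paratopological groups with H Hausdorff. If f is d-open, then the induced map f : G_sr → H_sr between the semiregularizations is continuous and d-open. -/

import Mathlib

/-!
The semiregular topology is coarser than the original one and contains every `interior (closure A)`
as an open set, so for a d-open `f` and a semiregularly open `O` the set
`interior (closure (f '' O))` is a semiregular neighbourhood of `f '' O` inside its semiregular
closure. Continuity holds because a continuous d-open map pulls regular open sets back to regular
open sets: for `W` regular open, `f` maps `interior (closure (f ⁻¹' W))` into
`interior (closure W) = W`.
-/

/-- The semiregularization of a topology: the topology generated by the regular
open sets `interior (closure U)` for `U` open. -/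
def semireg {X : Type*} (t : TopologicalSpace X) : TopologicalSpace X :=
  TopologicalSpace.generateFrom
    {s | ∃ U : Set X, t.IsOpen U ∧ s = @interior X t (@closure X t U)}

open Topology

def IsDOpenMap {X Y : Type*} [TopologicalSpace X] [TopologicalSpace Y] (f : X → Y) : Prop :=
  ∀ O : Set X, IsOpen O → f '' O ⊆ interior (closure (f '' O))

section Semireg

variable {X : Type*} (t : TopologicalSpace X)

theorem le_semireg : t ≤ semireg t :=
  le_generateFrom fun _ ⟨_, _, hs⟩ => hs ▸ @isOpen_interior X t _

theorem isOpen_semireg_interior_closure (A : Set X) :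
    IsOpen[semireg t] (@interior X t (closure[t] A)) := by
  let _ := t
  exact .basic _ ⟨interior (closure A), isOpen_interior, interior_closure_idem.symm⟩

theorem interior_closure_subset_semireg (A : Set X) :
    @interior X t (closure[t] A) ⊆ @interior X (semireg t) (closure[semireg t] A) :=
  @interior_maximal X (semireg t) _ _
    ((@interior_subset X t _).trans (closure.mono (le_semireg t)))
    (isOpen_semireg_interior_closure t A)

end Semireg

namespace IsDOpenMap

variable {X Y : Type*} [tX : TopologicalSpace X] [tY : TopologicalSpace Y] {f : X → Y}

theorem interior_closure_preimage_subset (hf : IsDOpenMap f) (hc : Continuous f) {W : Set Y}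
    (hW : interior (closure W) ⊆ W) : interior (closure (f ⁻¹' W)) ⊆ f ⁻¹' W := by
  have hclosure : f '' interior (closure (f ⁻¹' W)) ⊆ closure W :=
    calc f '' interior (closure (f ⁻¹' W))
        ⊆ closure (f '' (f ⁻¹' W)) :=
          (Set.image_mono interior_subset).trans (image_closure_subset_closure_image hc)
      _ ⊆ closure W := closure_mono (Set.image_preimage_subset f W)
  have himage : f '' interior (closure (f ⁻¹' W)) ⊆ W :=
    calc f '' interior (closure (f ⁻¹' W))
        ⊆ interior (closure (f '' interior (closure (f ⁻¹' W)))) := hf _ isOpen_interior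
      _ ⊆ interior (closure W) := interior_mono (closure_minimal hclosure isClosed_closure)
      _ ⊆ W := hW
  exact Set.image_subset_iff.mp himage

theorem continuous_semireg (hf : IsDOpenMap f) (hc : Continuous f) :
    Continuous[semireg tX, semireg tY] f := by
  refine continuous_generateFrom_iff.mpr ?_
  rintro _ ⟨V, -, rfl⟩
  have hregular : f ⁻¹' interior (closure V) = interior (closure (f ⁻¹' interior (closure V))) :=
    (interior_maximal subset_closure (isOpen_interior.preimage hc)).antisymm
      (hf.interior_closure_preimage_subset hc interior_closure_idem.le)
  exact hregular ▸ isOpen_semireg_interior_closure tX _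

theorem isDOpenMap_semireg (hf : IsDOpenMap f) : @IsDOpenMap X Y (semireg tX) (semireg tY) f :=
  fun O hO => (hf O (hO.mono (le_semireg tX))).trans (interior_closure_subset_semireg tY _)

end IsDOpenMap

theorem semireg_continuous_dopen_of_dopen_general {G H : Type*}
    (tG : TopologicalSpace G) (tH : TopologicalSpace H)
    (f : G → H) (hcont : @Continuous G H tG tH f)
    (hdopen : ∀ O : Set G, tG.IsOpen O →
      f '' O ⊆ @interior H tH (@closure H tH (f '' O))) :
    @Continuous G H (semireg tG) (semireg tH) f ∧
      ∀ O : Set G, (semireg tG).IsOpen O →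
        f '' O ⊆ @interior H (semireg tH) (@closure H (semireg tH) (f '' O)) :=
  ⟨IsDOpenMap.continuous_semireg hdopen hcont, IsDOpenMap.isDOpenMap_semireg hdopen⟩

/-- If `f : G → H` is a continuous d-open surjective homomorphism of paratopological
groups with `H` Hausdorff, then `f : G_sr → H_sr` is continuous and d-open. -/
theorem semireg_continuous_dopen_of_dopen {G H : Type*} [Group G] [Group H]
    (tG : TopologicalSpace G) (tH : TopologicalSpace H)
    (hGpara : @ContinuousMul G tG _) (hHpara : @ContinuousMul H tH _)
    (hT2 : @T2Space H tH)
    (f : G → H) (hhom : ∀ a b : G, f (a * b) = f a * f b)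
    (hsurj : Function.Surjective f) (hcont : @Continuous G H tG tH f)
    (hdopen : ∀ O : Set G, tG.IsOpen O →
      f '' O ⊆ @interior H tH (@closure H tH (f '' O))) :
    @Continuous G H (semireg tG) (semireg tH) f ∧
      ∀ O : Set G, (semireg tG).IsOpen O →
        f '' O ⊆ @interior H (semireg tH) (@closure H (semireg tH) (f '' O)) :=
  semireg_continuous_dopen_of_dopen_general tG tH f hcont hdopen
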